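/- The sequence (k² + k)_{k=0}^∞ = (k(k+1))_{k=0}^∞ is a Legendre multiplier sequence. -/

import Mathlib

open Polynomial

/-- A real polynomial is *hyperbolic* if all of its complex roots are real
(the zero polynomial and nonzero constants are vacuously hyperbolic). -/
def Hyperbolic (p : Polynomial ℝ) : Prop :=
  ∀ z ∈ (p.map (algebraMap ℝ ℂ)).roots, z.im = 0

/-- `γ` is a multiplier sequence for the simple set `q`: the linear operator
sending `q k` to `γ k • q k` maps hyperbolic polynomials to hyperbolic
polynomials.  (Since `q` is a simple set, every real polynomial has a unique
expansion `∑ a k • q k`, so this quantification over coefficient families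
expresses exactly that property.) -/
def IsMultiplierSeqFor (q : ℕ → Polynomial ℝ) (γ : ℕ → ℝ) : Prop :=
  ∀ (n : ℕ) (a : ℕ → ℝ),
    Hyperbolic (∑ k ∈ Finset.range n, C (a k) * q k) →
    Hyperbolic (∑ k ∈ Finset.range n, C (γ k * a k) * q k)

/-- The Legendre polynomials, via Rodrigues' formula
`Le n = (1/(2^n n!)) Dⁿ[(x²-1)ⁿ]`. -/
noncomputable def legendre (n : ℕ) : Polynomial ℝ :=
  C (1 / (2 ^ n * n.factorial : ℝ)) * derivative^[n] ((X ^ 2 - 1) ^ n)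

/-- A Legendre multiplier sequence. -/
def IsLegendreMS (γ : ℕ → ℝ) : Prop := IsMultiplierSeqFor legendre γ

/-!
The multiplier operator of `(k² + k)` is the Legendre differential operator
`p ↦ ((x² - 1) p')'`, whose eigenvectors are the Legendre polynomials with eigenvalues `k(k + 1)`.
It preserves hyperbolicity: multiplying by `x² - 1` adds two real roots, and by Rolle's theorem
differentiating a real polynomial with only real roots keeps all its roots real.
-/

namespace Polynomial

/-- By Rolle's theorem differentiation loses at most one real root, while it lowers the degree
by at least one. -/
theorem Splits.derivative_of_real {p : ℝ[X]} (hp : p.Splits) : (derivative p).Splits := by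
  rw [splits_iff_card_roots] at hp ⊢
  have := card_roots_le_derivative p
  have := natDegree_derivative_le p
  have := card_roots' (derivative p)
  omega

theorem splits_X_sq_sub_one {R : Type*} [CommRing R] : ((X : R[X]) ^ 2 - 1).Splits := by
  have : (X : R[X]) ^ 2 - 1 = (X + C 1) * (X + C (-1)) := by
    simp only [C_1, C_neg]; ring
  rw [this]
  exact (Splits.X_add_C 1).mul (Splits.X_add_C (-1))

end Polynomial

theorem hyperbolic_iff_splits {p : ℝ[X]} : Hyperbolic p ↔ p.Splits := by
  refine ⟨fun hp ↦ ?_, fun hp z hz ↦ ?_⟩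
  · refine (IsAlgClosed.splits _).of_splits_map (algebraMap ℝ ℂ) fun z hz ↦ ⟨z.re, ?_⟩
    exact Complex.ext (by simp) (by simp [hp z hz])
  · rw [hp.roots_map, Multiset.mem_map] at hz
    obtain ⟨r, -, rfl⟩ := hz
    simp

theorem isMultiplierSeqFor_of_linearMap {q : ℕ → ℝ[X]} {γ : ℕ → ℝ} (T : ℝ[X] →ₗ[ℝ] ℝ[X])
    (hTq : ∀ k, T (q k) = γ k • q k) (hT : ∀ p, Hyperbolic p → Hyperbolic (T p)) :
    IsMultiplierSeqFor q γ := by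
  intro n a ha
  convert hT _ ha using 1
  simp only [map_sum, C_mul', map_smul, hTq, smul_smul, mul_comm (γ _)]

theorem iterate_derivative_X_sq_sub_one_mul_derivative {R : Type*} [CommRing R] (p : R[X])
    (k : ℕ) :
    derivative^[k + 1] ((X ^ 2 - 1) * derivative p) =
      (X ^ 2 - 1) * derivative^[k + 2] p + 2 * ((k : R[X]) + 1) * X * derivative^[k + 1] p +
        ((k : R[X]) + 1) * (k : R[X]) * derivative^[k] p := by
  induction k with
  | zero => simp [derivative_mul]; ring
  | succ k ih =>
    rw [Function.iterate_succ_apply', ih]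
    simp only [Function.iterate_succ_apply', derivative_mul, derivative_add, derivative_sub,
      derivative_X_sq, C_ofNat, derivative_X, derivative_one, derivative_ofNat, derivative_natCast]
    push_cast
    ring

noncomputable def legendreOperator : ℝ[X] →ₗ[ℝ] ℝ[X] :=
  derivative ∘ₗ LinearMap.mulLeft ℝ (X ^ 2 - 1) ∘ₗ derivative

theorem legendreOperator_apply (p : ℝ[X]) :
    legendreOperator p = derivative ((X ^ 2 - 1) * derivative p) := rfl

theorem hyperbolic_legendreOperator {p : ℝ[X]} (hp : Hyperbolic p) :
    Hyperbolic (legendreOperator p) := by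
  rw [hyperbolic_iff_splits] at hp ⊢
  exact (splits_X_sq_sub_one.mul hp.derivative_of_real).derivative_of_real

/-- Differentiate `(x² - 1) u' = 2n x u`, for `u = (x² - 1)ⁿ`, `n + 1` times. -/
theorem legendreOperator_legendre (n : ℕ) :
    legendreOperator (legendre n) = ((n : ℝ) ^ 2 + n) • legendre n := by
  set u : ℝ[X] := (X ^ 2 - 1) ^ n
  have hu : (X ^ 2 - 1) * derivative u = C (2 * (n : ℝ)) * (u * X) := by
    cases n with
    | zero => simp [u]
    | succ n =>
      rw [derivative_pow, derivative_sub, derivative_X_sq, derivative_one, Nat.add_sub_cancel]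
      simp only [u, map_mul, C_ofNat]
      ring
  have hdiff := congrArg (derivative^[n + 1]) hu
  rw [iterate_derivative_X_sq_sub_one_mul_derivative, iterate_derivative_C_mul,
    iterate_derivative_mul_X] at hdiff
  have key : derivative ((X ^ 2 - 1) * derivative (derivative^[n] u)) =
      ((n : ℝ) ^ 2 + n) • derivative^[n] u := by
    simp only [Nat.add_sub_cancel, nsmul_eq_mul, map_mul, map_natCast, C_ofNat] at hdiff
    simp only [derivative_mul, derivative_sub, derivative_X_sq, derivative_one, C_ofNat,
      smul_eq_C_mul, map_add, map_pow, map_natCast, ← Function.iterate_succ_apply' derivative]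
    push_cast at hdiff
    linear_combination hdiff
  rw [legendre, ← smul_eq_C_mul, map_smul, legendreOperator_apply, key, smul_comm]

theorem stmt_14 : IsLegendreMS (fun k => (k : ℝ) ^ 2 + k) :=
  isMultiplierSeqFor_of_linearMap legendreOperator legendreOperator_legendre
    fun _ ↦ hyperbolic_legendreOperator
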